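/- arXiv:1009.3291 — 2 statements merged into one kernel-verified Lean document; each statement's English description precedes it below -/
import Mathlib

section
/- Let p be a prime, p ≥ 5, and let A = ⌊(p-1)/3⌋. The number of triples (n, m, l) of integers with 1 ≤ 3n ≤ p-1, 1 ≤ 3m+1 ≤ p-1, 1 ≤ 3l+2 ≤ p-1 such that 3n ≡ 3m+1-y ≡ 3l+2-2y (mod p) has a solution y, is at most A²/2 + A. -/
/-!
Eliminating `y` from the two congruences gives `3 (n + l) ≡ 3 (2 m) (mod p)`; as `3` is invertible
mod `p` and `n + l, 2 m < p`, this is the equation `n + l = 2 m` of integers. So a triple is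
determined by `n ∈ [1, A]` and `l ∈ [0, A)`, which has the parity of `n`, hence by `n` and `l / 2`:
there are at most `A ⌈A / 2⌉ ≤ A (A + 1) / 2` triples.
-/

open Finset

theorem add_eq_two_mul_of_three_mul_eq {p : ℕ} (h3 : Nat.Coprime 3 p) {n m l : ℕ}
    (hnl : n + l < p) (hm : 2 * m < p) {y : ZMod p}
    (h₁ : (3 * n : ZMod p) = 3 * m + 1 - y) (h₂ : (3 * n : ZMod p) = 3 * l + 2 - 2 * y) :
    n + l = 2 * m := by
  have hunit : IsUnit (3 : ZMod p) := by exact_mod_cast (ZMod.isUnit_iff_coprime 3 p).mpr h3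
  have hcast : ((n + l : ℕ) : ZMod p) = ((2 * m : ℕ) : ZMod p) := by
    push_cast
    exact hunit.mul_left_cancel (by linear_combination 2 * h₁ - h₂)
  rwa [ZMod.natCast_eq_natCast_iff', Nat.mod_eq_of_lt hnl, Nat.mod_eq_of_lt hm] at hcast

theorem cast_mul_half_succ_le (A : ℕ) :
    ((A * ((A + 1) / 2) : ℕ) : ℚ) ≤ (A : ℚ) ^ 2 / 2 + A := by
  obtain ⟨B, hB⟩ : ∃ B, (A + 1) / 2 = B := ⟨_, rfl⟩
  have h : ((2 * B : ℕ) : ℚ) ≤ A + 1 := by exact_mod_cast (by omega : 2 * B ≤ A + 1)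
  rw [hB]
  push_cast at h ⊢
  nlinarith [(A.cast_nonneg : (0 : ℚ) ≤ A)]

/-- Let `p ≥ 5` be prime and `A = ⌊(p-1)/3⌋`. The number of triples `(n, m, l)` with
`1 ≤ 3n ≤ p-1`, `1 ≤ 3m+1 ≤ p-1`, `1 ≤ 3l+2 ≤ p-1` such that
`3n ≡ 3m+1-y ≡ 3l+2-2y (mod p)` has a solution `y`, is at most `A²/2 + A`. -/
theorem stmt_4 (p : ℕ) (hp : p.Prime) (hp5 : 5 ≤ p) :
    (({t : ℕ × ℕ × ℕ |
        1 ≤ 3 * t.1 ∧ 3 * t.1 ≤ p - 1 ∧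
        1 ≤ 3 * t.2.1 + 1 ∧ 3 * t.2.1 + 1 ≤ p - 1 ∧
        1 ≤ 3 * t.2.2 + 2 ∧ 3 * t.2.2 + 2 ≤ p - 1 ∧
        ∃ y : ZMod p, (3 * t.1 : ZMod p) = 3 * t.2.1 + 1 - y ∧
          (3 * t.1 : ZMod p) = 3 * t.2.2 + 2 - 2 * y}.ncard : ℚ)) ≤
      (((p - 1) / 3 : ℕ) : ℚ)^2 / 2 + (((p - 1) / 3 : ℕ) : ℚ) := by
  set A := (p - 1) / 3 with hA
  have h3p : ¬ 3 ∣ p := fun h ↦ by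
    have := (Nat.prime_dvd_prime_iff_eq Nat.prime_three hp).mp h
    omega
  have hcop : Nat.Coprime 3 p := (Nat.Prime.coprime_iff_not_dvd Nat.prime_three).mpr h3p
  refine le_trans (Nat.cast_le.mpr <| Set.ncard_le_ncard_of_injOn (fun t => (t.1, t.2.2 / 2))
    ?_ ?_ (Icc 1 A ×ˢ range ((A + 1) / 2)).finite_toSet) ?_
  · rintro ⟨n, m, l⟩ ⟨hn₀, hn, -, -, -, hl, -⟩
    dsimp only at *
    simp only [coe_product, coe_Icc, coe_range, Set.mem_prod, Set.mem_Icc, Set.mem_Iio]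
    omega
  · rintro ⟨n, m, l⟩ ⟨-, hn, -, hm, -, hl, y, hy₁, hy₂⟩
      ⟨n', m', l'⟩ ⟨-, hn', -, hm', -, hl', y', hy₁', hy₂'⟩ heq
    dsimp only at *
    have hsum := add_eq_two_mul_of_three_mul_eq hcop (by omega) (by omega) hy₁ hy₂
    have hsum' := add_eq_two_mul_of_three_mul_eq hcop (by omega) (by omega) hy₁' hy₂'
    simp only [Prod.mk.injEq] at heq ⊢
    omega
  · rw [Set.ncard_coe_finset, card_product, Nat.card_Icc, card_range, Nat.add_sub_cancel]
    exact cast_mul_half_succ_le A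
end

section
/- Let p be prime, k ≥ 3, and 0 ≤ v₁ < v₂ < … < v_k ≤ r-1 with r ≤ p. Given m₁, …, m_k in Z_p, the parity groups B_{m₁,v₁}, …, B_{m_k,v_k} have a common block in some column j ∈ {2,…,p} if and only if there exists y with y ≡ (m₂-m₁)/(v₂-v₁) ≡ (m₃-m₂)/(v₃-v₂) ≡ … ≡ (m_k-m_{k-1})/(v_k-v_{k-1}) (mod p), where j = y+1. -/
/-! The condition `m₁ - v₁y = mᵢ - vᵢy` for all `i` is equivalent to the consecutive equalities
`mᵢ - vᵢy = mᵢ₊₁ - vᵢ₊₁y`, and since the slopes are distinct residues mod `p`, each of these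
can be solved for `y` as `y = (mᵢ₊₁ - mᵢ)/(vᵢ₊₁ - vᵢ)`. -/

theorem forall_eq_one_iff_forall_succ_eq {α : Type*} (f : ℕ → α) (k : ℕ) :
    (∀ i, 1 ≤ i → i ≤ k → f i = f 1) ↔ ∀ i, 1 ≤ i → i < k → f (i + 1) = f i := by
  constructor
  · intro h i h1 hik
    rw [h i h1 hik.le, h (i + 1) (by omega) hik]
  · intro h i h1 hik
    induction i, h1 using Nat.le_induction with
    | base => rfl
    | succ n hn ih => rw [h n hn (by omega), ih (by omega)]

theorem sub_mul_eq_sub_mul_iff_eq_div {K : Type*} [Field K] {a b c d y : K} (h : c - d ≠ 0) :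
    a - c * y = b - d * y ↔ y = (a - b) / (c - d) := by
  rw [eq_div_iff h]
  constructor <;> intro e <;> linear_combination -e

theorem exists_forall_sub_mul_eq_iff {K : Type*} [Field K] (m w : ℕ → K) (k : ℕ)
    (hw : ∀ i, 1 ≤ i → i < k → w (i + 1) - w i ≠ 0) :
    (∃ y, ∀ i, 1 ≤ i → i ≤ k → m i - w i * y = m 1 - w 1 * y) ↔
      ∃ y, ∀ i, 1 ≤ i → i < k → y = (m (i + 1) - m i) / (w (i + 1) - w i) := by
  refine exists_congr fun y => ?_
  rw [forall_eq_one_iff_forall_succ_eq (fun i => m i - w i * y)]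
  exact forall₃_congr fun i h1 hik => sub_mul_eq_sub_mul_iff_eq_div (hw i h1 hik)

theorem ZMod.natCast_sub_natCast_ne_zero {p a b : ℕ} (hab : a < b) (hb : b < p) :
    (b : ZMod p) - a ≠ 0 := by
  rw [sub_ne_zero, Ne, ZMod.natCast_eq_natCast_iff]
  exact fun h => hab.ne' (h.eq_of_lt_of_lt hb (hab.trans hb))

theorem stmt_16_general (p : ℕ) [hp : Fact p.Prime] (k r : ℕ) (hr : r ≤ p)
    (v : ℕ → ℕ) (hv : ∀ i j, 1 ≤ i → i < j → j ≤ k → v i < v j) (hvr : v k ≤ r - 1)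
    (m : ℕ → ZMod p) :
    (∃ y : ZMod p, ∀ i, 1 ≤ i → i ≤ k → m i - (v i : ZMod p) * y = m 1 - (v 1 : ZMod p) * y) ↔
    (∃ y : ZMod p, ∀ i, 1 ≤ i → i < k →
      y = (m (i + 1) - m i) / ((v (i + 1) : ZMod p) - (v i : ZMod p))) := by
  have hvk : v k < p := by have := hp.out.two_le; omega
  have hvp : ∀ j, 1 ≤ j → j ≤ k → v j < p := fun j h1 hjk => by
    rcases hjk.lt_or_eq with hjk | rfl
    · exact (hv j k h1 hjk le_rfl).trans hvk
    · exact hvk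
  exact exists_forall_sub_mul_eq_iff m (fun i => (v i : ZMod p)) k fun i h1 hik =>
    ZMod.natCast_sub_natCast_ne_zero (hv i (i + 1) h1 (by omega) hik)
      (hvp (i + 1) (by omega) hik)

/-- Let `p` be prime, `k ≥ 3`, and `0 ≤ v₁ < v₂ < … < v_k ≤ r-1` with `r ≤ p` (slopes
indexed `1,…,k`, distinct mod `p`). Given `m₁, …, m_k` in `Z_p`, the parity groups
`B_{mᵢ,vᵢ}` have a common block in some column `j = y+1` if and only if there exists
`y` with `y ≡ (m₂-m₁)/(v₂-v₁) ≡ … ≡ (m_k-m_{k-1})/(v_k-v_{k-1}) (mod p)`,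
where a common block in column `y+1` means `m₁ - v₁y ≡ m₂ - v₂y ≡ … ≡ m_k - v_ky`. -/
theorem stmt_16 (p : ℕ) [hp : Fact p.Prime] (k r : ℕ) (hk : 3 ≤ k) (hr : r ≤ p)
    (v : ℕ → ℕ) (hv : ∀ i j, 1 ≤ i → i < j → j ≤ k → v i < v j) (hvr : v k ≤ r - 1)
    (m : ℕ → ZMod p) :
    (∃ y : ZMod p, ∀ i, 1 ≤ i → i ≤ k → m i - (v i : ZMod p) * y = m 1 - (v 1 : ZMod p) * y) ↔
    (∃ y : ZMod p, ∀ i, 1 ≤ i → i < k →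
      y = (m (i + 1) - m i) / ((v (i + 1) : ZMod p) - (v i : ZMod p))) :=
  stmt_16_general p (hp := hp) k r hr v hv hvr m
end
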